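/- arXiv:math/0510061 — 5 statements merged into one kernel-verified Lean document; each statement's English description precedes it below -/
import Mathlib

section
/- Let H be a Hilbert space and Π a bounded idempotent on H. Let Π₀ be the orthogonal projection onto the range of Π. Then Π₀ = Π Π* B⁻¹ where B = 1 + (Π − Π*)(Π* − Π). -/
/-!
Since `Π₀` is a self-adjoint idempotent with the range of `Π`, we have `Π₀ Π = Π` and
`Π Π₀ = Π₀`, hence `Π₀ Π* = Π₀`. Expanding `B = 1 + ΠΠ* + Π*Π - Π - Π*` then gives
`Π₀ B = ΠΠ*`. Finally `B = 1 + (Π* - Π)* (Π* - Π) ≥ 1` in the C⋆-algebra of bounded operators,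
so `B` is invertible and `Π₀ = ΠΠ* B⁻¹`.
-/

open ContinuousLinearMap

theorem ContinuousLinearMap.IsIdempotentElem.mul_eq_right_of_range_le {R M : Type*} [Semiring R]
    [TopologicalSpace M] [AddCommMonoid M] [Module R M] {q p : M →L[R] M}
    (hq : IsIdempotentElem q)
    (h : LinearMap.range (p : M →ₗ[R] M) ≤ LinearMap.range (q : M →ₗ[R] M)) : q * p = p :=
  coe_injective <| (LinearMap.IsIdempotentElem.comp_eq_right_iff hq.toLinearMap _).mpr h

theorem mul_one_add_sub_mul_sub_eq_mul {R : Type*} [Ring R] {p q r : R}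
    (hp : IsIdempotentElem p) (hq : IsIdempotentElem q) (hrp : r * p = p) (hrq : r * q = r) :
    r * (1 + (p - q) * (q - p)) = p * q := by
  have hB : 1 + (p - q) * (q - p) = 1 + p * q + q * p - p - q := by
    have hpq : (p - q) * (q - p) = p * q - p * p - q * q + q * p := by noncomm_ring
    rw [hpq, hp.eq, hq.eq]
    abel
  have hr : r * (1 + p * q + q * p - p - q) = r + r * p * q + r * q * p - r * p - r * q := by
    noncomm_ring
  rw [hB, hr, hrp, hrq, hrp]
  abel

theorem CStarAlgebra.isUnit_one_add_star_mul_self {A : Type*} [CStarAlgebra A] [PartialOrder A]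
    [StarOrderedRing A] (a : A) : IsUnit (1 + star a * a) :=
  isUnit_of_le 1 (le_add_of_nonneg_right (star_mul_self_nonneg a)) isStrictlyPositive_one

/-- Let `P` be a bounded idempotent on a complex Hilbert space `H` and let
`P₀` be the orthogonal projection onto the range of `P` (characterized as the self-adjoint
idempotent with the same range as `P`).  Then `P₀ = P P* B⁻¹` where
`B = 1 + (P − P*)(P* − P)`. -/
theorem stmt1 {H : Type*} [NormedAddCommGroup H] [InnerProductSpace ℂ H] [CompleteSpace H]
    (P P₀ : H →L[ℂ] H) (hP : P * P = P)
    (hP₀idem : P₀ * P₀ = P₀) (hP₀sa : adjoint P₀ = P₀)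
    (hrange : LinearMap.range (P₀ : H →ₗ[ℂ] H) = LinearMap.range (P : H →ₗ[ℂ] H)) :
    P₀ = P * adjoint P *
      Ring.inverse ((1 : H →L[ℂ] H) + (P - adjoint P) * (adjoint P - P)) := by
  have hP₀P : P₀ * P = P := IsIdempotentElem.mul_eq_right_of_range_le hP₀idem hrange.ge
  have hPP₀ : P * P₀ = P₀ := IsIdempotentElem.mul_eq_right_of_range_le hP hrange.le
  have hP₀P' : P₀ * adjoint P = P₀ := by
    simpa only [star_mul, star_eq_adjoint, hP₀sa] using congrArg star hPP₀
  have hP' : IsIdempotentElem (adjoint P) := by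
    simpa only [star_eq_adjoint] using IsIdempotentElem.star hP
  have hB : IsUnit ((1 : H →L[ℂ] H) + (P - adjoint P) * (adjoint P - P)) := by
    simpa only [star_sub, star_eq_adjoint, adjoint_adjoint] using
      CStarAlgebra.isUnit_one_add_star_mul_self (adjoint P - P)
  rw [← mul_one_add_sub_mul_sub_eq_mul hP hP' hP₀P hP₀P', Ring.mul_inverse_cancel_right _ _ hB]
end

section
/- Let V be a finite-dimensional real inner product space with inner product g₀, let J be an orthogonal complex structure on V (J² = −1, J orthogonal for g₀), and let J' be another complex structure with J'ᵀ = J J' J (transpose w.r.t. g₀) and such that J'ᵀJ is positive definite. Then for each t ∈ [0,1], the bilinear form g_t = (1−t)g₀ + t·g₀(J'ᵀJ·, ·) is an inner product, and B_t := A_t⁻¹ J with A_t = (1−t)·1 + t·J'ᵀJ is antisymmetric with respect to g_t. -/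
open scoped RealInnerProductSpace

/-- Let `V` be a finite-dimensional real inner product space (inner product
`g₀ = ⟪·,·⟫`), `J` an orthogonal complex structure, and `J'` a complex structure with
`J'ᵀ = J J' J` and `J'ᵀJ` positive definite.  Then for each `t ∈ [0,1]` the bilinear form
`g_t = (1−t)g₀ + t·g₀(J'ᵀJ·,·)` is an inner product (symmetric and positive definite),
`A_t = (1−t)·1 + t·J'ᵀJ` is invertible, and `B_t = A_t⁻¹ J` is antisymmetric w.r.t. `g_t`. -/
theorem stmt8 {V : Type*} [NormedAddCommGroup V] [InnerProductSpace ℝ V]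
    [FiniteDimensional ℝ V]
    (J J' : V →ₗ[ℝ] V) (hJ2 : J * J = -1) (hJ'2 : J' * J' = -1)
    (hJorth : ∀ x y : V, ⟪J x, J y⟫ = ⟪x, y⟫)
    (hJ't : LinearMap.adjoint J' = J * J' * J)
    (hpos : ∀ x : V, x ≠ 0 → 0 < ⟪(LinearMap.adjoint J' * J) x, x⟫)
    (t : ℝ) (ht : t ∈ Set.Icc (0 : ℝ) 1)
    (g : V → V → ℝ)
    (hg : ∀ x y : V, g x y = (1 - t) * ⟪x, y⟫ + t * ⟪(LinearMap.adjoint J' * J) x, y⟫)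
    (A : V →ₗ[ℝ] V) (hA : A = (1 - t) • (1 : V →ₗ[ℝ] V) + t • (LinearMap.adjoint J' * J)) :
    (∀ x y : V, g x y = g y x) ∧ (∀ x : V, x ≠ 0 → 0 < g x x) ∧
    IsUnit A ∧
    (∀ x y : V, g ((Ring.inverse A * J) x) y = - g x ((Ring.inverse A * J) y)) := by
  set P := LinearMap.adjoint J' * J with hP
  -- J is skew-adjoint
  have hJJ : ∀ y : V, J (J y) = -y := by
    intro y
    have := congrArg (fun f : V →ₗ[ℝ] V => f y) hJ2
    simpa using this
  have hJskew : ∀ x y : V, ⟪J x, y⟫ = -⟪x, J y⟫ := by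
    intro x y
    have h := hJorth x (J y)
    rw [hJJ y] at h
    rw [inner_neg_right] at h
    linarith
  -- P is self-adjoint
  have hPsa : ∀ x y : V, ⟪P x, y⟫ = ⟪x, P y⟫ := by
    intro x y
    have h1 : ⟪P x, y⟫ = ⟪J x, J' y⟫ := by
      simp [hP, Module.End.mul_apply, LinearMap.adjoint_inner_left]
    have h2 : ⟪x, P y⟫ = ⟪J' x, J y⟫ := by
      simp [hP, Module.End.mul_apply, LinearMap.adjoint_inner_right]
    have h3 : ⟪J' x, J y⟫ = ⟪x, (J * J' * J) (J y)⟫ := by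
      rw [← hJ't, LinearMap.adjoint_inner_right]
    have h4 : (J * J' * J) (J y) = -(J (J' y)) := by
      simp [Module.End.mul_apply, hJJ]
    rw [h1, h2, h3, h4, inner_neg_right, ← hJskew]
  -- g in terms of A
  have hgA : ∀ x y : V, g x y = ⟪A x, y⟫ := by
    intro x y
    rw [hg, hA]
    simp [LinearMap.add_apply, LinearMap.smul_apply, inner_add_left,
      real_inner_smul_left]
  have hAsa : ∀ x y : V, ⟪A x, y⟫ = ⟪x, A y⟫ := by
    intro x y
    rw [hA]
    simp [LinearMap.add_apply, LinearMap.smul_apply, inner_add_left, inner_add_right,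
      real_inner_smul_left, real_inner_smul_right, hPsa]
  -- symmetry
  have hsymm : ∀ x y : V, g x y = g y x := by
    intro x y
    rw [hgA, hgA, hAsa, real_inner_comm]
  -- positivity
  have hposg : ∀ x : V, x ≠ 0 → 0 < g x x := by
    intro x hx
    rw [hg]
    obtain ⟨ht0, ht1⟩ := ht
    rcases eq_or_lt_of_le ht0 with h | h
    · rw [← h]
      have : (0:ℝ) < ‖x‖ ^ 2 := pow_pos (norm_pos_iff.mpr hx) 2
      simpa [real_inner_self_eq_norm_sq] using this
    · have h1 : 0 ≤ (1 - t) * ⟪x, x⟫ :=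
        mul_nonneg (by linarith) real_inner_self_nonneg
      have h2 : 0 < t * ⟪P x, x⟫ := mul_pos h (hpos x hx)
      linarith
  -- invertibility
  have hunit : IsUnit A := by
    rw [LinearMap.isUnit_iff_ker_eq_bot, LinearMap.ker_eq_bot']
    intro x hx
    by_contra hx0
    have := hposg x hx0
    rw [hgA, hx, inner_zero_left] at this
    exact lt_irrefl _ this
  refine ⟨hsymm, hposg, hunit, ?_⟩
  intro x y
  have hAi : A * Ring.inverse A = 1 := Ring.mul_inverse_cancel A hunit
  have key : ∀ z : V, A (Ring.inverse A z) = z := by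
    intro z
    have := congrArg (fun f : V →ₗ[ℝ] V => f z) hAi
    simpa [Module.End.mul_apply] using this
  calc g ((Ring.inverse A * J) x) y = ⟪A (Ring.inverse A (J x)), y⟫ := by
        rw [hgA]; rfl
    _ = ⟪J x, y⟫ := by rw [key]
    _ = -⟪x, J y⟫ := hJskew x y
    _ = -⟪A x, Ring.inverse A (J y)⟫ := by rw [hAsa, key]
    _ = - g x ((Ring.inverse A * J) y) := by rw [hgA]; rfl
end

section
/- Let ω be a nondegenerate alternating bilinear form on a finite-dimensional real vector space V. Then the set of ω-calibrated complex structures {J : J² = −1, ω(J·, J·) = ω, and ω(x, Jx) > 0 for all x ≠ 0} is path-connected. -/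
/-!
Fix one calibrated `j`: writing `ω` in a basis as an invertible skew matrix `Ω`, the matrix
`Ω⁻¹ √(ΩᵀΩ)` is one.
Any other calibrated `J` equals `j A` with `A = -j J`, an `ω`-symplectic map that is positive for
the metric `ω(·, j ·)`. The Möbius family `j (A + s) (s A + 1)⁻¹`, `s ∈ [0, 1]`, joins `J` to `j`
inside the set of calibrated structures: `s A + 1` is invertible by positivity, the square is `-1`
because `A j A = j`, and compatibility and positivity become identities in `A` after substituting
`x = (s A + 1) z`.
-/

open scoped MatrixOrder

namespace Matrix

variable {n : Type*} [Fintype n] [DecidableEq n]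

theorem exists_calibrated_of_transpose_eq_neg {Ω : Matrix n n ℝ} (hskew : Ωᵀ = -Ω)
    (hΩ : IsUnit Ω) : ∃ K : Matrix n n ℝ, K * K = -1 ∧ Kᵀ * Ω * K = Ω ∧ (Ω * K).PosDef := by
  have hP : (Ωᴴ * Ω).PosDef := PosDef.conjTranspose_mul_self Ω (mulVec_injective_iff_isUnit.mpr hΩ)
  have hΩΩ : Ωᴴ * Ω = -(Ω * Ω) := by
    rw [conjTranspose_eq_transpose_of_trivial, hskew, neg_mul]
  have hSΩ : Commute (CFC.sqrt (Ωᴴ * Ω)) Ω := by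
    rw [CFC.sqrt_eq_cfc]
    refine Commute.cfc_nnreal ?_ _
    rw [hΩΩ]
    exact ((Commute.refl Ω).mul_left (Commute.refl Ω)).neg_left
  set S := CFC.sqrt (Ωᴴ * Ω)
  have hS : S.PosDef := isStrictlyPositive_iff_posDef.mp hP.isStrictlyPositive.sqrt
  have hSS : S * S = -(Ω * Ω) := by
    rw [CFC.sqrt_mul_sqrt_self _ hP.posSemidef.nonneg, hΩΩ]
  set Ω' : Matrix n n ℝ := ↑hΩ.unit⁻¹
  have hSΩ' : Commute S Ω' := hSΩ.units_inv_right (u := hΩ.unit)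
  set K := Ω' * S
  have hKK : K * K = -1 := calc
    K * K = Ω' * Ω' * (S * S) := by
      simp only [K, mul_assoc, ← mul_assoc S, hSΩ'.eq]
    _ = -1 := by
      rw [hSS, mul_neg, mul_assoc, ← mul_assoc Ω' Ω, hΩ.val_inv_mul, one_mul, hΩ.val_inv_mul]
  have hΩK : Ω * K = S := by rw [← mul_assoc, hΩ.mul_val_inv, one_mul]
  refine ⟨K, hKK, ?_, hΩK ▸ hS⟩
  have hKtΩ : Kᵀ * Ω = -(Ω * K) := by
    have := hS.isHermitian.eq
    rw [conjTranspose_eq_transpose_of_trivial, ← hΩK, transpose_mul, hskew, mul_neg] at this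
    rw [← this, neg_neg]
  rw [hKtΩ, neg_mul, mul_assoc, hKK, mul_neg_one, neg_neg]

end Matrix

section

variable {V : Type*} [NormedAddCommGroup V] [NormedSpace ℝ V]

def IsCalibratedComplexStructure (ω : V →ₗ[ℝ] V →ₗ[ℝ] ℝ) (J : V →L[ℝ] V) : Prop :=
  J * J = -1 ∧ (∀ x y, ω (J x) (J y) = ω x y) ∧ ∀ x, x ≠ 0 → 0 < ω x (J x)

open Matrix in
theorem exists_isCalibratedComplexStructure [FiniteDimensional ℝ V] {ω : V →ₗ[ℝ] V →ₗ[ℝ] ℝ}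
    (hω : ω.IsAlt) (hnd : ω.SeparatingLeft) : ∃ J, IsCalibratedComplexStructure ω J := by
  let b := Module.finBasis ℝ V
  set Ω := LinearMap.toMatrix₂ b b ω
  have hskew : Ωᵀ = -Ω := by
    ext i k
    simp only [Ω, transpose_apply, Matrix.neg_apply, LinearMap.toMatrix₂_apply]
    exact (hω.neg _ _).symm
  have hunit : IsUnit Ω := (Matrix.isUnit_iff_isUnit_det _).mpr
    (isUnit_iff_ne_zero.mpr ((LinearMap.separatingLeft_iff_det_ne_zero b).mp hnd))
  obtain ⟨K, hKK, hKΩK, hΩK⟩ := Matrix.exists_calibrated_of_transpose_eq_neg hskew hunit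
  let J : V →L[ℝ] V := LinearMap.toContinuousLinearMap (Matrix.toLin b b K)
  refine ⟨J, ?_, fun x y => ?_, fun x hx => ?_⟩
  · ext x
    simp [J, ← Matrix.toLin_mul_apply, hKK]
  · have hcompl : ω.compl₁₂ J.toLinearMap J.toLinearMap = ω := by
      apply (LinearMap.toMatrix₂ b b).injective
      rw [LinearMap.toMatrix₂_compl₁₂ b b b b]
      simpa [J] using hKΩK
    exact congr($hcompl x y)
  · have hform : LinearMap.toMatrix₂ b b (ω.compl₂ J.toLinearMap) = Ω * K := by
      rw [LinearMap.toMatrix₂_compl₂ b b b]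
      simp [J, Ω]
    have hrepr : ⇑(b.repr x) ≠ 0 := by simpa using hx
    have hdot := apply_eq_dotProduct_toMatrix₂_mulVec b b (ω.compl₂ J.toLinearMap) x x
    rw [LinearMap.compl₂_apply, ContinuousLinearMap.coe_coe, hform] at hdot
    rw [hdot]
    simpa using hΩK.dotProduct_mulVec_pos hrepr

theorem mul_cayley_mul_self {R : Type*} [Ring R] [Algebra ℝ R] {j a : R} (hj : j * j = -1)
    (ha : j * a * (j * a) = -1) {s : ℝ} (hq : IsUnit (s • a + 1)) :
    j * (a + s • 1) * Ring.inverse (s • a + 1) * (j * (a + s • 1) * Ring.inverse (s • a + 1))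
      = -1 := by
  have haja : a * j * a = j := by
    have := congrArg (j * ·) ha
    simp only [← mul_assoc, hj, mul_neg, mul_one, neg_mul, one_mul, neg_inj] at this
    exact this
  have hswap : (s • a + 1) * (j * a) = j * (a + s • 1) := by
    rw [add_mul, smul_mul_assoc, ← mul_assoc, haja, one_mul, mul_add, mul_smul_comm, mul_one,
      add_comm]
  calc j * (a + s • 1) * Ring.inverse (s • a + 1) * (j * (a + s • 1) * Ring.inverse (s • a + 1))
      = j * (a + s • 1) * (Ring.inverse (s • a + 1) * ((s • a + 1) * (j * a)))
          * Ring.inverse (s • a + 1) := by rw [hswap]; simp only [mul_assoc]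
    _ = (j * a * (j * a) + s • (j * j) * a) * Ring.inverse (s • a + 1) := by
          rw [← mul_assoc (Ring.inverse _), Ring.inverse_mul_cancel _ hq, one_mul]
          simp only [mul_add, add_mul, mul_assoc, smul_mul_assoc, mul_smul_comm, mul_one]
    _ = -1 := by
          rw [ha, hj, smul_neg, neg_mul, smul_mul_assoc, one_mul, ← neg_add, neg_mul,
            add_comm, Ring.mul_inverse_cancel _ hq]

theorem apply_add_smul_one_eq_apply_smul_add_one {ω : V →ₗ[ℝ] V →ₗ[ℝ] ℝ} {A : V →L[ℝ] V}
    (hA : ∀ x y, ω (A x) (A y) = ω x y) (s : ℝ) (x y : V) :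
    ω ((A + s • 1) x) ((A + s • 1) y) = ω ((s • A + 1) x) ((s • A + 1) y) := by
  simp only [add_apply, smul_apply, one_apply_eq_self, map_add, map_smul, LinearMap.add_apply,
    LinearMap.smul_apply, hA, smul_eq_mul]
  ring

theorem ContinuousLinearMap.isUnit_of_injective [FiniteDimensional ℝ V] {T : V →L[ℝ] V}
    (hT : Function.Injective T) : IsUnit T :=
  T.isUnit_iff_bijective.mpr ⟨hT, LinearMap.injective_iff_surjective (f := T.toLinearMap) |>.mp hT⟩

noncomputable def cayleyPath (j A : V →L[ℝ] V) (s : ℝ) : V →L[ℝ] V :=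
  j * (A + s • 1) * Ring.inverse (s • A + 1)

namespace IsCalibratedComplexStructure

variable {ω : V →ₗ[ℝ] V →ₗ[ℝ] ℝ} {j A : V →L[ℝ] V}

theorem apply_apply (hj : IsCalibratedComplexStructure ω j) (x : V) : j (j x) = -x := by
  simpa using congr($(hj.1) x)

theorem nonneg (hj : IsCalibratedComplexStructure ω j) (x : V) : 0 ≤ ω x (j x) := by
  rcases eq_or_ne x 0 with rfl | hx
  · simp
  · exact (hj.2.2 x hx).le

section Cayley

variable (hω : ω.IsAlt) (hj : IsCalibratedComplexStructure ω j)
  (hjA : IsCalibratedComplexStructure ω (j * A))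
include hj hjA

theorem symplectic_of_mul (x y : V) : ω (A x) (A y) = ω x y := by
  rw [← hj.2.1, ← mul_apply_eq_comp, ← mul_apply_eq_comp, hjA.2.1]

include hω in
theorem cayley_pos {s : ℝ} (hs : 0 ≤ s) {z : V} (hz : z ≠ 0) :
    0 < ω ((s • A + 1) z) (j ((A + s • 1) z)) := by
  have hAj : ω (A z) (j z) = ω z (j (A z)) := by
    rw [← hj.2.1, hj.apply_apply, map_neg, hω.neg]
  have expand : ω ((s • A + 1) z) (j ((A + s • 1) z))
      = s * ω (A z) (j (A z)) + (s ^ 2 + 1) * ω z ((j * A) z) + s * ω z (j z) := by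
    simp only [add_apply, smul_apply, one_apply_eq_self, map_add, map_smul, LinearMap.add_apply,
      LinearMap.smul_apply, smul_eq_mul, hAj, mul_apply_eq_comp]
    ring
  rw [expand]
  have := hjA.2.2 z hz
  have := hj.nonneg (A z)
  have := hj.nonneg z
  positivity

variable [FiniteDimensional ℝ V]

include hω in
theorem isUnit_smul_add_one {s : ℝ} (hs : 0 ≤ s) : IsUnit (s • A + 1) := by
  refine ContinuousLinearMap.isUnit_of_injective ((injective_iff_map_eq_zero _).mpr fun z hz => ?_)
  by_contra hz0
  have := cayley_pos hω hj hjA hs hz0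
  rw [hz, map_zero, LinearMap.zero_apply] at this
  exact this.false

include hω in
theorem isCalibrated_cayleyPath {s : ℝ} (hs : 0 ≤ s) :
    IsCalibratedComplexStructure ω (cayleyPath j A s) := by
  have hq := isUnit_smul_add_one hω hj hjA hs
  have hqq : ∀ x, (s • A + 1) (Ring.inverse (s • A + 1) x) = x := fun x => by
    rw [← mul_apply_eq_comp, Ring.mul_inverse_cancel _ hq, one_apply_eq_self]
  refine ⟨mul_cayley_mul_self hj.1 hjA.1 hq, fun x y => ?_, fun x hx => ?_⟩
  · simp only [cayleyPath, mul_apply_eq_comp, hj.2.1]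
    rw [apply_add_smul_one_eq_apply_smul_add_one (symplectic_of_mul hj hjA), hqq, hqq]
  · obtain ⟨z, rfl⟩ : ∃ z, (s • A + 1) z = x := ⟨_, hqq x⟩
    have hz : z ≠ 0 := by rintro rfl; simp at hx
    have hinv : Ring.inverse (s • A + 1) ((s • A + 1) z) = z := by
      rw [← mul_apply_eq_comp, Ring.inverse_mul_cancel _ hq, one_apply_eq_self]
    simpa only [cayleyPath, mul_apply_eq_comp, hinv] using cayley_pos hω hj hjA hs hz

include hω in
theorem joinedIn_mul : JoinedIn {K | IsCalibratedComplexStructure ω K} (j * A) j := by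
  refine JoinedIn.ofLine (f := cayleyPath j A) ?_ ?_ ?_ ?_
  · intro s hs
    have hq := isUnit_smul_add_one hω hj hjA hs.1
    have hinv : ContinuousAt Ring.inverse (s • A + 1) :=
      hq.unit_spec ▸ NormedRing.inverse_continuousAt hq.unit
    exact (((continuous_const.mul (by fun_prop)).continuousAt).mul
      (hinv.comp (f := fun s : ℝ => s • A + 1) (by fun_prop))).continuousWithinAt
  · simp [cayleyPath]
  · have hq := isUnit_smul_add_one hω hj hjA zero_le_one
    simp only [cayleyPath, one_smul] at hq ⊢
    rw [mul_assoc, Ring.mul_inverse_cancel _ hq, mul_one]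
  · rintro _ ⟨s, hs, rfl⟩
    exact isCalibrated_cayleyPath hω hj hjA hs.1

end Cayley

theorem joinedIn {J : V →L[ℝ] V} [FiniteDimensional ℝ V]
    (hω : ω.IsAlt) (hj : IsCalibratedComplexStructure ω j)
    (hJ : IsCalibratedComplexStructure ω J) :
    JoinedIn {K | IsCalibratedComplexStructure ω K} J j := by
  have hmul : j * -(j * J) = J := by rw [mul_neg, ← mul_assoc, hj.1, neg_one_mul, neg_neg]
  exact hmul ▸ joinedIn_mul hω hj (hmul.symm ▸ hJ)

end IsCalibratedComplexStructure

end

/-- Let `ω` be a nondegenerate alternating bilinear form on a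
finite-dimensional real vector space `V`.  Then the set of `ω`-calibrated complex
structures `{J : J² = −1, ω(J·,J·) = ω, ω(x, Jx) > 0 for x ≠ 0}` is path-connected. -/
theorem stmt10 {V : Type*} [NormedAddCommGroup V] [NormedSpace ℝ V]
    [FiniteDimensional ℝ V]
    (ω : V →ₗ[ℝ] V →ₗ[ℝ] ℝ) (halt : ∀ x : V, ω x x = 0)
    (hnd : ∀ x : V, (∀ y : V, ω x y = 0) → x = 0) :
    IsPathConnected {J : V →L[ℝ] V |
      J * J = -1 ∧ (∀ x y : V, ω (J x) (J y) = ω x y) ∧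
      ∀ x : V, x ≠ 0 → 0 < ω x (J x)} := by
  obtain ⟨j, hj⟩ := exists_isCalibratedComplexStructure halt hnd
  exact ⟨j, hj, fun {_} hJ => (hj.joinedIn halt hJ).symm⟩
end

section
/- Let A : [0,1] → Hermitian n×n matrices be continuous and suppose the rank of A(t) is constant in t. Then the number of negative eigenvalues of A(t) (counted with multiplicity) is constant in t. -/
/-!
The numbers of negative and of positive eigenvalues are both lower semicontinuous. If `B` has
`re ⟪B x, x⟫ ≤ -δ ‖x‖²` on the span `W` of its negative eigenvectors, then every `C` with
`‖C - B‖ < δ` is negative definite on `W`; such a subspace meets the nonnegative eigenspaces of `C`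
trivially, so `dim W` is at most the number of negative eigenvalues of `C`. Since the two counts
add up to the rank, which is constant, each is locally constant along the path, hence constant
on the connected interval.
-/

open Module Finset Filter Topology RCLike
open scoped InnerProductSpace

section
variable {𝕜 E ι : Type*} [RCLike 𝕜] [NormedAddCommGroup E] [InnerProductSpace 𝕜 E] [Fintype ι]

theorem OrthonormalBasis.finrank_span_image (b : OrthonormalBasis ι 𝕜 E) (s : Finset ι) :
    finrank 𝕜 (Submodule.span 𝕜 (b '' s)) = #s := by
  classical
  have hb := b.orthonormal.linearIndependent
  rw [← s.coe_image, finrank_span_finset_eq_card, card_image_of_injective _ hb.injective]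
  simpa using (hb.linearIndepOn (s : Set ι)).id_image

theorem OrthonormalBasis.repr_eq_zero_of_mem_span_image (b : OrthonormalBasis ι 𝕜 E) {s : Set ι}
    {x : E} (hx : x ∈ Submodule.span 𝕜 (b '' s)) {i : ι} (hi : i ∉ s) : b.repr x i = 0 := by
  rw [← b.coe_toBasis, Basis.mem_span_image] at hx
  rw [← b.coe_toBasis_repr_apply]
  exact Finsupp.notMem_support_iff.1 fun h => hi (hx h)

namespace ContinuousLinearMap
variable {T : E →L[𝕜] E} {b : OrthonormalBasis ι 𝕜 E} {μ : ι → ℝ}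

theorem reApplyInnerSelf_eq_sum (hb : ∀ i, T (b i) = (μ i : 𝕜) • b i) (x : E) :
    T.reApplyInnerSelf x = ∑ i, μ i * ‖b.repr x i‖ ^ 2 := by
  have hTx : T x = ∑ i, (μ i * b.repr x i : 𝕜) • b i := by
    conv_lhs => rw [← b.sum_repr x]
    simp only [map_sum, map_smul, hb, smul_smul, mul_comm]
  rw [reApplyInnerSelf_apply, hTx, sum_inner, map_sum]
  refine Finset.sum_congr rfl fun i _ => ?_
  rw [inner_smul_left, ← b.repr_apply_apply, map_mul (starRingEnd 𝕜), conj_ofReal, mul_assoc,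
    RCLike.conj_mul, ← ofReal_pow, ← ofReal_mul, ofReal_re]

theorem reApplyInnerSelf_le_of_mem_span_image (hb : ∀ i, T (b i) = (μ i : 𝕜) • b i)
    {s : Set ι} {c : ℝ} (hc : ∀ i ∈ s, μ i ≤ c) {x : E} (hx : x ∈ Submodule.span 𝕜 (b '' s)) :
    T.reApplyInnerSelf x ≤ c * ‖x‖ ^ 2 := by
  rw [reApplyInnerSelf_eq_sum hb, ← b.repr.norm_map, EuclideanSpace.norm_sq_eq, mul_sum]
  refine sum_le_sum fun i _ => ?_
  by_cases hi : i ∈ s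
  · exact mul_le_mul_of_nonneg_right (hc i hi) (sq_nonneg _)
  · simp [b.repr_eq_zero_of_mem_span_image hx hi]

theorem le_reApplyInnerSelf_of_mem_span_image (hb : ∀ i, T (b i) = (μ i : 𝕜) • b i)
    {s : Set ι} {c : ℝ} (hc : ∀ i ∈ s, c ≤ μ i) {x : E} (hx : x ∈ Submodule.span 𝕜 (b '' s)) :
    c * ‖x‖ ^ 2 ≤ T.reApplyInnerSelf x := by
  rw [reApplyInnerSelf_eq_sum hb, ← b.repr.norm_map, EuclideanSpace.norm_sq_eq, mul_sum]
  refine sum_le_sum fun i _ => ?_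
  by_cases hi : i ∈ s
  · exact mul_le_mul_of_nonneg_right (hc i hi) (sq_nonneg _)
  · simp [b.repr_eq_zero_of_mem_span_image hx hi]

theorem reApplyInnerSelf_le_add_opNorm_sub (S T : E →L[𝕜] E) (x : E) :
    S.reApplyInnerSelf x ≤ T.reApplyInnerSelf x + ‖S - T‖ * ‖x‖ ^ 2 := by
  have h : (S - T).reApplyInnerSelf x ≤ ‖S - T‖ * ‖x‖ ^ 2 := calc
    _ ≤ ‖(S - T) x‖ * ‖x‖ := (re_le_norm _).trans (norm_inner_le_norm _ _)
    _ ≤ ‖S - T‖ * ‖x‖ * ‖x‖ := by gcongr; exact le_opNorm _ _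
    _ = ‖S - T‖ * ‖x‖ ^ 2 := by ring
  simp only [reApplyInnerSelf_apply, sub_apply, inner_sub_left, map_sub] at h ⊢
  linarith

theorem finrank_le_card_neg_of_reApplyInnerSelf_neg
    (hb : ∀ i, T (b i) = (μ i : 𝕜) • b i) {W : Submodule 𝕜 E}
    (hW : ∀ x ∈ W, x ≠ 0 → T.reApplyInnerSelf x < 0) :
    finrank 𝕜 W ≤ #{i | μ i < 0} := by
  set U := Submodule.span 𝕜 (b '' ↑({i | ¬ μ i < 0} : Finset ι))
  have hdisj : Disjoint W U := by
    refine Submodule.disjoint_def.2 fun x hxW hxU => not_not.1 fun hx => ?_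
    have hnonneg := le_reApplyInnerSelf_of_mem_span_image hb (c := 0) (by simp) hxU
    linarith [hW x hxW hx]
  have : FiniteDimensional 𝕜 E := b.toBasis.finiteDimensional_of_finite
  have hdim := Submodule.finrank_add_finrank_le_of_disjoint hdisj
  rw [b.finrank_span_image, finrank_eq_card_basis b.toBasis] at hdim
  have hsplit := card_filter_add_card_filter_not (s := univ) (fun i => μ i < 0)
  rw [card_univ] at hsplit
  omega

theorem eventually_card_neg_le {ι' : Type*} [Fintype ι']
    (hb : ∀ i, T (b i) = (μ i : 𝕜) • b i) :
    ∀ᶠ S in 𝓝 T, ∀ (b' : OrthonormalBasis ι' 𝕜 E) (μ' : ι' → ℝ),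
      (∀ i, S (b' i) = (μ' i : 𝕜) • b' i) → #{i | μ i < 0} ≤ #{i | μ' i < 0} := by
  obtain ⟨δ, hμδ, hδ⟩ : ∃ δ, (∀ i, μ i < 0 → μ i < -δ) ∧ 0 < δ := by
    refine ((eventually_all.2 fun i => ?_).filter_mono nhdsWithin_le_nhds |>.and
      self_mem_nhdsWithin).exists (f := 𝓝[>] (0 : ℝ))
    by_cases hi : μ i < 0
    · filter_upwards [Iio_mem_nhds (neg_pos.2 hi)] with δ hδ _ using lt_neg.mpr hδ
    · exact .of_forall fun _ h => absurd h hi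
  filter_upwards [Metric.ball_mem_nhds T hδ] with S hS b' μ' hb'
  rw [← b.finrank_span_image]
  refine finrank_le_card_neg_of_reApplyInnerSelf_neg hb' fun x hx hx0 => ?_
  have hTx := reApplyInnerSelf_le_of_mem_span_image hb (c := -δ)
    (fun i hi => (hμδ i (by simpa using hi)).le) hx
  have hST : ‖S - T‖ < δ := by rwa [← dist_eq_norm]
  have hSx := reApplyInnerSelf_le_add_opNorm_sub S T x
  have hx2 : 0 < ‖x‖ ^ 2 := by positivity
  nlinarith

theorem eventually_card_pos_le {ι' : Type*} [Fintype ι']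
    (hb : ∀ i, T (b i) = (μ i : 𝕜) • b i) :
    ∀ᶠ S in 𝓝 T, ∀ (b' : OrthonormalBasis ι' 𝕜 E) (μ' : ι' → ℝ),
      (∀ i, S (b' i) = (μ' i : 𝕜) • b' i) → #{i | 0 < μ i} ≤ #{i | 0 < μ' i} := by
  have hneg : ∀ i, (-T) (b i) = ((-μ i : ℝ) : 𝕜) • b i := by simp [hb]
  filter_upwards [(continuous_neg.tendsto T).eventually (eventually_card_neg_le (ι' := ι') hneg)]
    with S hS b' μ' hb'
  simpa using hS b' (-μ') (by simp [hb'])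

end ContinuousLinearMap
end

theorem Matrix.continuous_toEuclideanCLM {𝕜 ι : Type*} [RCLike 𝕜] [Fintype ι] [DecidableEq ι] :
    Continuous (toEuclideanCLM (n := ι) (𝕜 := 𝕜)) :=
  (toEuclideanCLM (n := ι) (𝕜 := 𝕜)).toAlgEquiv.toLinearMap.continuous_of_finiteDimensional

namespace Matrix.IsHermitian
variable {𝕜 ι : Type*} [RCLike 𝕜] [Fintype ι] [DecidableEq ι] {B : Matrix ι ι 𝕜}

theorem toEuclideanCLM_eigenvectorBasis (hB : B.IsHermitian) (i : ι) :
    toEuclideanCLM (𝕜 := 𝕜) B (hB.eigenvectorBasis i) =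
      (hB.eigenvalues i : 𝕜) • hB.eigenvectorBasis i := by
  ext j
  rw [ofLp_toEuclideanCLM, hB.mulVec_eigenvectorBasis]
  simp [RCLike.real_smul_eq_coe_mul]

theorem rank_eq_card_neg_add_card_pos (hB : B.IsHermitian) :
    B.rank = #{i | hB.eigenvalues i < 0} + #{i | 0 < hB.eigenvalues i} := by
  rw [hB.rank_eq_card_non_zero_eigs, Fintype.card_subtype, ← card_union_of_disjoint, ← filter_or]
  · exact congrArg card (filter_congr fun i _ => ne_iff_lt_or_gt)
  · exact disjoint_filter.2 fun i _ h => lt_asymm h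

theorem eventually_card_neg_le (hB : B.IsHermitian) :
    ∀ᶠ C in 𝓝 B, ∀ hC : C.IsHermitian,
      #{i | hB.eigenvalues i < 0} ≤ #{i | hC.eigenvalues i < 0} :=
  ((continuous_toEuclideanCLM.tendsto B).eventually
    (ContinuousLinearMap.eventually_card_neg_le hB.toEuclideanCLM_eigenvectorBasis)).mono
    fun _ h hC => h _ _ hC.toEuclideanCLM_eigenvectorBasis

theorem eventually_card_pos_le (hB : B.IsHermitian) :
    ∀ᶠ C in 𝓝 B, ∀ hC : C.IsHermitian,
      #{i | 0 < hB.eigenvalues i} ≤ #{i | 0 < hC.eigenvalues i} :=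
  ((continuous_toEuclideanCLM.tendsto B).eventually
    (ContinuousLinearMap.eventually_card_pos_le hB.toEuclideanCLM_eigenvectorBasis)).mono
    fun _ h hC => h _ _ hC.toEuclideanCLM_eigenvectorBasis

end Matrix.IsHermitian

theorem Matrix.card_neg_eigenvalues_eq_of_isPreconnected {𝕜 ι X : Type*} [RCLike 𝕜] [Fintype ι]
    [DecidableEq ι] [TopologicalSpace X] {S : Set X} (hS : IsPreconnected S)
    {A : X → Matrix ι ι 𝕜} (hA : ∀ t, (A t).IsHermitian) (hcont : ContinuousOn A S) {r : ℕ}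
    (hrank : ∀ t ∈ S, (A t).rank = r) {s t : X} (hs : s ∈ S) (ht : t ∈ S) :
    #{i | (hA s).eigenvalues i < 0} = #{i | (hA t).eigenvalues i < 0} := by
  refine hS.constant (f := fun t => #{i | (hA t).eigenvalues i < 0}) (fun s hs => ?_) hs ht
  refine continuousWithinAt_const.congr_of_eventuallyEq ?_ rfl
  filter_upwards [(hcont s hs).eventually (hA s).eventually_card_neg_le,
    (hcont s hs).eventually (hA s).eventually_card_pos_le, self_mem_nhdsWithin]
    with u hneg hpos hu
  have hrs := (hA s).rank_eq_card_neg_add_card_pos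
  have hru := (hA u).rank_eq_card_neg_add_card_pos
  have hneg_le := hneg (hA u)
  have hpos_le := hpos (hA u)
  rw [hrank s hs] at hrs
  rw [hrank u hu] at hru
  omega

/-- If `A : [0,1] → Hermitian n×n matrices` is continuous with constant
rank, then the number of negative eigenvalues of `A t` (with multiplicity) is constant. -/
theorem stmt11 {n : ℕ} (A : ℝ → Matrix (Fin n) (Fin n) ℂ)
    (hA : ∀ t, (A t).IsHermitian)
    (hcont : ContinuousOn A (Set.Icc (0 : ℝ) 1))
    (r : ℕ) (hrank : ∀ t ∈ Set.Icc (0 : ℝ) 1, (A t).rank = r) :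
    ∀ s ∈ Set.Icc (0 : ℝ) 1, ∀ t ∈ Set.Icc (0 : ℝ) 1,
      (Finset.univ.filter fun i => (hA s).eigenvalues i < 0).card =
      (Finset.univ.filter fun i => (hA t).eigenvalues i < 0).card :=
  fun _ hs _ ht =>
    Matrix.card_neg_eigenvalues_eq_of_isPreconnected isPreconnected_Icc hA hcont hrank hs ht
end

section
/- Let F be a bounded operator on a Hilbert space with F² = 1 − R, R compact, and suppose the annulus {λ : r₁ < |λ − 1| < r₂} (with 0 < r₁ < r₂ < 2) is disjoint from Sp(F). Then for r ∈ (r₁, r₂), the operator Π = (1/2πi)∮_{|λ−1|=r}(F − λ)⁻¹ dλ is an idempotent and Π − ½(F + 1) is compact. -/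
/-!
Let `J_ρ = ∮_{|z-1|=ρ} (z - F)⁻¹ dz`. By Cauchy's theorem `J_ρ` is the same for all `ρ` in the
annulus, so `J_r * J_r = J_r' * J_r` with `r' < r` is a double integral over two concentric circles.
The resolvent identity gives
`(z - F)⁻¹ (w - F)⁻¹ = (w - z)⁻¹ (z - F)⁻¹ + (z - w)⁻¹ (w - F)⁻¹`. Integrated over the outer
circle, the first term gives `2πi (z - F)⁻¹`; after Fubini the second one vanishes because `w` lies
outside the inner circle. Hence `J_r² = 2πi J_r`.

From `F² = 1 - R` we get `(z - F)(z + F) = z² - 1 + R`, hence the partial fraction decomposition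
`(z - F)⁻¹ = (z - 1)⁻¹ (F + 1)/2 + (z + 1)⁻¹ (1 - F)/2 - (z² - 1)⁻¹ (z - F)⁻¹ R`.
The circle `|z - 1| = r < 2` winds once around `1` and not around `-1`, so `Π = (F + 1)/2 - X R`
for a bounded operator `X`, and `X R` is compact because `R` is.
-/

open scoped Real

open Complex Metric Set

section CircleIntegral

variable {E F : Type*} [NormedAddCommGroup E] [NormedSpace ℂ E]
  [NormedAddCommGroup F] [NormedSpace ℂ F]

theorem ContinuousLinearMap.circleIntegral_comp_comm [CompleteSpace E] [CompleteSpace F]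
    (L : E →L[ℂ] F) {f : ℂ → E} {c : ℂ} {R : ℝ} (hf : CircleIntegrable f c R) :
    ∮ z in C(c, R), L (f z) = L (∮ z in C(c, R), f z) := by
  simp only [circleIntegral, ← L.intervalIntegral_comp_comm hf.out, L.map_smul]

theorem circleIntegral_sub_inv_eq_zero {c w : ℂ} {R : ℝ} (hR : 0 ≤ R)
    (hw : w ∉ closedBall c R) : ∮ z in C(c, R), (z - w)⁻¹ = 0 := by
  refine DiffContOnCl.circleIntegral_eq_zero hR (DifferentiableOn.diffContOnCl ?_)
  refine ((differentiableOn_id.sub (differentiableOn_const w)).inv fun z hz => ?_).mono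
    closure_ball_subset_closedBall
  exact sub_ne_zero.2 fun h => hw ((show z = w from h) ▸ hz)

theorem circleIntegral_circleIntegral_swap {f : ℂ → ℂ → E} {c c' : ℂ} {R R' : ℝ}
    (hR : 0 ≤ R) (hR' : 0 ≤ R')
    (hf : ContinuousOn (Function.uncurry f) (sphere c R ×ˢ sphere c' R')) :
    ∮ z in C(c, R), ∮ w in C(c', R'), f z w = ∮ w in C(c', R'), ∮ z in C(c, R), f z w := by
  have hf' : Continuous fun p : ℝ × ℝ => f (circleMap c R p.1) (circleMap c' R' p.2) :=
    hf.comp_continuous (f := fun p : ℝ × ℝ => (circleMap c R p.1, circleMap c' R' p.2))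
      (by fun_prop) fun p => ⟨circleMap_mem_sphere c hR p.1, circleMap_mem_sphere c' hR' p.2⟩
  have hcont : Continuous fun p : ℝ × ℝ => deriv (circleMap c R) p.1 •
      deriv (circleMap c' R') p.2 • f (circleMap c R p.1) (circleMap c' R' p.2) := by
    simp only [deriv_circleMap]
    exact ((continuous_circleMap 0 R).comp continuous_fst |>.mul continuous_const).smul
      (((continuous_circleMap 0 R').comp continuous_snd |>.mul continuous_const).smul hf')
  simp only [circleIntegral, ← intervalIntegral.integral_smul]
  rw [MeasureTheory.intervalIntegral_intervalIntegral_swap]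
  · simp only [smul_comm (deriv (circleMap c R) _)]
  · exact (hcont.continuousOn.integrableOn_compact (isCompact_uIcc.prod isCompact_uIcc)).mono_set
      (prod_mono uIoc_subset_uIcc uIoc_subset_uIcc)

theorem circleIntegral_circleIntegral_sub_inv_smul_eq_zero [CompleteSpace E] {g : ℂ → E}
    {c : ℂ} {R R' : ℝ} (hR' : 0 ≤ R') (hR'R : R' < R) (hg : ContinuousOn g (sphere c R)) :
    ∮ z in C(c, R'), ∮ w in C(c, R), (z - w)⁻¹ • g w = 0 := by
  have hne : ∀ p ∈ sphere c R' ×ˢ sphere c R, p.1 - p.2 ≠ 0 := by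
    rintro ⟨z, w⟩ ⟨hz, hw⟩ h
    rw [mem_sphere, ← sub_eq_zero.1 h, mem_sphere.1 hz] at hw
    exact hR'R.ne hw
  rw [circleIntegral_circleIntegral_swap hR' (hR'.trans hR'R.le)]
  · have hinner : EqOn (fun w => ∮ z in C(c, R'), (z - w)⁻¹ • g w) 0 (sphere c R) :=
      fun w hw => by
        have hw' : w ∉ closedBall c R' := by
          rw [mem_closedBall, mem_sphere.1 hw, not_le]
          exact hR'R
        simp only [Pi.zero_apply, circleIntegral.integral_smul_const,
          circleIntegral_sub_inv_eq_zero hR' hw', zero_smul]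
    rw [circleIntegral.integral_congr (hR'.trans hR'R.le) hinner]
    simp [circleIntegral]
  · exact ((continuousOn_fst.sub continuousOn_snd).inv₀ hne).smul
      (hg.comp continuousOn_snd fun p hp => hp.2)

end CircleIntegral

theorem resolvent_sub_resolvent_eq_smul_mul {𝕜 B : Type*} [CommRing 𝕜] [Ring B] [Algebra 𝕜 B]
    {b : B} {z w : 𝕜} (hz : z ∈ resolventSet 𝕜 b) (hw : w ∈ resolventSet 𝕜 b) :
    resolvent b z - resolvent b w = (w - z) • (resolvent b z * resolvent b w) := by
  obtain ⟨u, hu⟩ := hz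
  obtain ⟨v, hv⟩ := hw
  have hvu : (w - z) • (1 : B) = v - u := by
    rw [hu, hv, sub_smul, ← Algebra.algebraMap_eq_smul_one, ← Algebra.algebraMap_eq_smul_one]
    abel
  simp only [resolvent, ← hu, ← hv, Ring.inverse_unit]
  calc (↑u⁻¹ : B) - ↑v⁻¹ = ↑u⁻¹ * (v - u) * ↑v⁻¹ := by simp [mul_sub, sub_mul, mul_assoc]
    _ = (w - z) • (↑u⁻¹ * ↑v⁻¹) := by rw [← hvu, mul_smul_comm, mul_one, smul_mul_assoc]

theorem resolvent_eq_of_mul_self_eq_one_sub {𝕜 B : Type*} [Field 𝕜] [Ring B] [Algebra 𝕜 B]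
    {b k : B} (hbk : b * b = 1 - k) {z : 𝕜} (hz : z ∈ resolventSet 𝕜 b) (h2 : (2 : 𝕜) ≠ 0)
    (hz₁ : z - 1 ≠ 0) (hz₂ : z + 1 ≠ 0) :
    resolvent b z = (z - 1)⁻¹ • (2⁻¹ : 𝕜) • (b + 1) + (z + 1)⁻¹ • (2⁻¹ : 𝕜) • (1 - b)
      - (z ^ 2 - 1)⁻¹ • resolvent b z * k := by
  have hsq : z ^ 2 - 1 ≠ 0 := by
    rw [show z ^ 2 - 1 = (z - 1) * (z + 1) by ring]
    exact mul_ne_zero hz₁ hz₂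
  obtain ⟨u, hu⟩ := hz
  have hR : resolvent b z = ↑u⁻¹ := by rw [resolvent, ← hu, Ring.inverse_unit]
  have key : (z ^ 2 - 1) • resolvent b z + resolvent b z * k = z • 1 + b := by
    have h : (u : B) * (z • 1 + b) = (z ^ 2 - 1) • 1 + k := by
      rw [hu, Algebra.algebraMap_eq_smul_one, sub_mul, mul_add, mul_add, hbk]
      simp only [smul_smul, mul_one, one_mul, smul_mul_assoc, mul_smul_comm, sq, sub_smul,
        one_smul]
      abel
    rw [hR, ← (Units.inv_mul_eq_iff_eq_mul u).2 h.symm, mul_add, mul_smul_comm, mul_one]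
  calc resolvent b z
      = (z ^ 2 - 1)⁻¹ • ((z ^ 2 - 1) • resolvent b z + resolvent b z * k)
        - (z ^ 2 - 1)⁻¹ • resolvent b z * k := by
        rw [smul_add, inv_smul_smul₀ hsq, smul_mul_assoc, add_sub_cancel_right]
    _ = _ := by
        rw [key]
        congr 1
        match_scalars <;> field_simp <;> ring

section BanachAlgebra

variable {A : Type*} [NormedRing A] [NormedAlgebra ℂ A] [CompleteSpace A] {a : A}

theorem mul_circleIntegral (x : A) {f : ℂ → A} {c : ℂ} {R : ℝ} (hf : CircleIntegrable f c R) :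
    x * ∮ z in C(c, R), f z = ∮ z in C(c, R), x * f z :=
  ((ContinuousLinearMap.mul ℂ A x).circleIntegral_comp_comm hf).symm

theorem circleIntegral_mul (x : A) {f : ℂ → A} {c : ℂ} {R : ℝ} (hf : CircleIntegrable f c R) :
    (∮ z in C(c, R), f z) * x = ∮ z in C(c, R), f z * x :=
  (((ContinuousLinearMap.mul ℂ A).flip x).circleIntegral_comp_comm hf).symm

theorem continuousOn_resolvent : ContinuousOn (resolvent a) (resolventSet ℂ a) :=
  fun _ hz => (spectrum.hasDerivAt_resolvent_const_left hz).continuousAt.continuousWithinAt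

theorem circleIntegral_resolvent_eq_of_annulus_subset {c : ℂ} {r r' : ℝ} (hr' : 0 < r')
    (hr'r : r' ≤ r) (hann : closedBall c r \ ball c r' ⊆ resolventSet ℂ a) :
    ∮ z in C(c, r'), resolvent a z = ∮ z in C(c, r), resolvent a z := by
  refine (circleIntegral_eq_of_differentiable_on_annulus_off_countable hr' hr'r countable_empty
    (continuousOn_resolvent.mono hann) fun z hz => ?_).symm
  have hz' : z ∈ closedBall c r \ ball c r' :=
    ⟨ball_subset_closedBall hz.1.1, fun h => hz.1.2 (ball_subset_closedBall h)⟩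
  exact (spectrum.hasDerivAt_resolvent_const_left (hann hz')).differentiableAt

theorem resolvent_mul_circleIntegral_resolvent {c z : ℂ} {r : ℝ} (hz : z ∈ ball c r)
    (hza : z ∈ resolventSet ℂ a) (hs : sphere c r ⊆ resolventSet ℂ a) :
    resolvent a z * ∮ w in C(c, r), resolvent a w =
      (2 * π * I : ℂ) • resolvent a z + ∮ w in C(c, r), (z - w)⁻¹ • resolvent a w := by
  have hr : 0 ≤ r := (nonempty_ball.1 ⟨z, hz⟩).le
  have hne : ∀ w ∈ sphere c r, w - z ≠ 0 := fun w hw h =>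
    (sphere_disjoint_ball (x := c) (ε := r)).ne_of_mem hw hz (sub_eq_zero.1 h)
  have hcont : ContinuousOn (resolvent a) (sphere c r) := continuousOn_resolvent.mono hs
  have hid : EqOn (fun w => resolvent a z * resolvent a w)
      (fun w => (w - z)⁻¹ • resolvent a z + (z - w)⁻¹ • resolvent a w) (sphere c r) := by
    intro w hw
    simp only
    rw [← neg_sub w z, inv_neg, neg_smul, ← sub_eq_add_neg, ← smul_sub,
      resolvent_sub_resolvent_eq_smul_mul hza (hs hw), inv_smul_smul₀ (hne w hw)]
  have hne' : ∀ w ∈ sphere c r, z - w ≠ 0 := fun w hw => by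
    rw [← neg_sub]
    exact neg_ne_zero.2 (hne w hw)
  rw [mul_circleIntegral _ (hcont.circleIntegrable hr), circleIntegral.integral_congr hr hid,
    circleIntegral.integral_add, circleIntegral.integral_smul_const,
    circleIntegral.integral_sub_inv_of_mem_ball hz]
  · exact ((continuousOn_id.sub continuousOn_const).inv₀ hne).smul continuousOn_const
      |>.circleIntegrable hr
  · exact ((continuousOn_const.sub continuousOn_id).inv₀ hne').smul hcont |>.circleIntegrable hr

theorem circleIntegral_resolvent_mul_self {c : ℂ} {r r' : ℝ} (hr' : 0 < r') (hr'r : r' < r)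
    (hann : closedBall c r \ ball c r' ⊆ resolventSet ℂ a) :
    (∮ z in C(c, r), resolvent a z) * ∮ z in C(c, r), resolvent a z =
      (2 * π * I : ℂ) • ∮ z in C(c, r), resolvent a z := by
  set J := ∮ z in C(c, r), resolvent a z
  have hs : sphere c r ⊆ resolventSet ℂ a := fun z hz =>
    hann ⟨sphere_subset_closedBall hz, by rw [mem_ball, mem_sphere.1 hz]; exact not_lt.2 hr'r.le⟩
  have hs' : sphere c r' ⊆ resolventSet ℂ a := fun z hz =>
    hann ⟨closedBall_subset_closedBall hr'r.le (sphere_subset_closedBall hz),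
      by rw [mem_ball, mem_sphere.1 hz]; exact lt_irrefl r'⟩
  have hcont' : ContinuousOn (resolvent a) (sphere c r') := continuousOn_resolvent.mono hs'
  have hJ : ∮ z in C(c, r'), resolvent a z = J :=
    circleIntegral_resolvent_eq_of_annulus_subset hr' hr'r.le hann
  have hpt : EqOn (fun z => resolvent a z * J)
      (fun z => (2 * π * I : ℂ) • resolvent a z + ∮ w in C(c, r), (z - w)⁻¹ • resolvent a w)
      (sphere c r') := fun z hz =>
    resolvent_mul_circleIntegral_resolvent (sphere_subset_ball hr'r hz) (hs' hz) hs
  have hsmul : ContinuousOn (fun z => (2 * π * I : ℂ) • resolvent a z) (sphere c r') :=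
    hcont'.const_smul _
  have hg : ContinuousOn (fun z => ∮ w in C(c, r), (z - w)⁻¹ • resolvent a w) (sphere c r') := by
    refine ContinuousOn.congr (f := fun z => resolvent a z * J - (2 * π * I : ℂ) • resolvent a z)
      ((hcont'.mul continuousOn_const).sub hsmul) fun z hz => ?_
    simp only [show resolvent a z * J = _ from hpt hz, add_sub_cancel_left]
  calc J * J = ∮ z in C(c, r'), resolvent a z * J := by
        rw [← circleIntegral_mul _ (hcont'.circleIntegrable hr'.le), hJ]
    _ = (2 * π * I : ℂ) • J + ∮ z in C(c, r'), ∮ w in C(c, r), (z - w)⁻¹ • resolvent a w := by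
        rw [circleIntegral.integral_congr hr'.le hpt, circleIntegral.integral_add
          (hsmul.circleIntegrable hr'.le) (hg.circleIntegrable hr'.le),
          circleIntegral.integral_smul, hJ]
    _ = (2 * π * I : ℂ) • J := by
        rw [circleIntegral_circleIntegral_sub_inv_smul_eq_zero hr'.le hr'r
          (continuousOn_resolvent.mono hs), add_zero]

noncomputable def rieszProjection (a : A) (c : ℂ) (r : ℝ) : A :=
  (2 * π * I : ℂ)⁻¹ • ∮ z in C(c, r), resolvent a z

theorem isIdempotentElem_rieszProjection {c : ℂ} {r r' : ℝ} (hr' : 0 < r') (hr'r : r' < r)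
    (hann : closedBall c r \ ball c r' ⊆ resolventSet ℂ a) :
    IsIdempotentElem (rieszProjection a c r) := by
  have h2πI : (2 * π * I : ℂ) ≠ 0 := by simp [Real.pi_ne_zero, I_ne_zero]
  rw [IsIdempotentElem, rieszProjection, smul_mul_smul_comm,
    circleIntegral_resolvent_mul_self hr' hr'r hann, smul_smul, inv_mul_cancel_right₀ h2πI]

theorem rieszProjection_eq_of_mul_self_eq_one_sub {k : A} (hak : a * a = 1 - k) {r : ℝ}
    (hr : 0 < r) (hr₂ : r < 2) (hs : sphere (1 : ℂ) r ⊆ resolventSet ℂ a) :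
    rieszProjection a 1 r = (2⁻¹ : ℂ) • (a + 1)
      - ((2 * π * I : ℂ)⁻¹ • ∮ z in C(1, r), (z ^ 2 - 1)⁻¹ • resolvent a z) * k := by
  have h2πI : (2 * π * I : ℂ) ≠ 0 := by simp [Real.pi_ne_zero, I_ne_zero]
  have hfar : (-1 : ℂ) ∉ closedBall 1 r := by
    rw [mem_closedBall, dist_eq_norm, show ‖(-1 : ℂ) - 1‖ = 2 by norm_num, not_le]
    exact hr₂
  have hz₁ : ∀ z ∈ sphere (1 : ℂ) r, z - 1 ≠ 0 := fun z hz =>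
    sub_ne_zero.2 (ne_of_mem_sphere hz hr.ne')
  have hz₂ : ∀ z ∈ sphere (1 : ℂ) r, z + 1 ≠ 0 := fun z hz h =>
    hfar (sphere_subset_closedBall (eq_neg_of_add_eq_zero_left h ▸ hz))
  have hsq : ∀ z ∈ sphere (1 : ℂ) r, z ^ 2 - 1 ≠ 0 := fun z hz => by
    rw [show z ^ 2 - 1 = (z - 1) * (z + 1) by ring]
    exact mul_ne_zero (hz₁ z hz) (hz₂ z hz)
  have hcont : ContinuousOn (resolvent a : ℂ → A) (sphere 1 r) := continuousOn_resolvent.mono hs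
  have hint₁ : CircleIntegrable (fun z => (z - 1)⁻¹ • (2⁻¹ : ℂ) • (a + 1)) 1 r :=
    ((continuousOn_id.sub continuousOn_const).inv₀ hz₁).smul continuousOn_const
      |>.circleIntegrable hr.le
  have hint₂ : CircleIntegrable (fun z => (z + 1)⁻¹ • (2⁻¹ : ℂ) • (1 - a)) 1 r :=
    ((continuousOn_id.add continuousOn_const).inv₀ hz₂).smul continuousOn_const
      |>.circleIntegrable hr.le
  have hint₁₂ : CircleIntegrable
      (fun z => (z - 1)⁻¹ • (2⁻¹ : ℂ) • (a + 1) + (z + 1)⁻¹ • (2⁻¹ : ℂ) • (1 - a)) 1 r :=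
    hint₁.add hint₂
  have hint₃ : CircleIntegrable (fun z => (z ^ 2 - 1)⁻¹ • resolvent a z) 1 r :=
    (((continuousOn_id.pow 2).sub continuousOn_const).inv₀ hsq).smul hcont
      |>.circleIntegrable hr.le
  have hint₄ : CircleIntegrable (fun z => (z ^ 2 - 1)⁻¹ • resolvent a z * k) 1 r :=
    (((continuousOn_id.pow 2).sub continuousOn_const).inv₀ hsq).smul hcont
      |>.mul continuousOn_const |>.circleIntegrable hr.le
  have hfar_integral : ∮ z in C(1, r), (z + 1)⁻¹ = 0 := by
    simpa [sub_neg_eq_add] using circleIntegral_sub_inv_eq_zero hr.le hfar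
  rw [rieszProjection, circleIntegral.integral_congr hr.le fun z hz =>
      resolvent_eq_of_mul_self_eq_one_sub hak (hs hz) two_ne_zero (hz₁ z hz) (hz₂ z hz),
    circleIntegral.integral_sub hint₁₂ hint₄, circleIntegral.integral_add hint₁ hint₂,
    circleIntegral.integral_smul_const, circleIntegral.integral_smul_const,
    circleIntegral.integral_sub_center_inv 1 hr.ne', hfar_integral, ← circleIntegral_mul k hint₃,
    zero_smul, add_zero, smul_sub, inv_smul_smul₀ h2πI, smul_mul_assoc]

end BanachAlgebra

theorem stmt15_general {H : Type*} [NormedAddCommGroup H] [InnerProductSpace ℂ H] [CompleteSpace H]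
    (F R : H →L[ℂ] H) (hR : IsCompactOperator R) (hF : F * F = 1 - R)
    (r₁ r₂ : ℝ) (h01 : 0 < r₁) (h22 : r₂ < 2)
    (hann : ∀ l : ℂ, r₁ < ‖l - 1‖ → ‖l - 1‖ < r₂ → l ∉ spectrum ℂ F)
    (r : ℝ) (hr : r ∈ Set.Ioo r₁ r₂)
    (P : H →L[ℂ] H)
    (hP : P = (2 * π * Complex.I : ℂ)⁻¹ •
        ∮ z in C(1, r), Ring.inverse (z • (1 : H →L[ℂ] H) - F)) :
    P * P = P ∧ IsCompactOperator ((P - (1 / 2 : ℂ) • (F + 1)) : H →L[ℂ] H) := by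
  obtain ⟨hr₁, hr₂⟩ := hr
  have hres : ∀ z : ℂ, r₁ < ‖z - 1‖ → ‖z - 1‖ ≤ r → z ∈ resolventSet ℂ F := fun z h₁ h₂ =>
    spectrum.mem_resolventSet_iff.2 (spectrum.notMem_iff.1 (hann z h₁ (h₂.trans_lt hr₂)))
  obtain rfl : P = rieszProjection F 1 r := by
    simp [hP, rieszProjection, resolvent, Algebra.algebraMap_eq_smul_one]
  refine ⟨isIdempotentElem_rieszProjection (r' := (r₁ + r) / 2) (by linarith) (by linarith)
    fun z ⟨hz, hz'⟩ => hres z ?_ (mem_closedBall_iff_norm.1 hz), ?_⟩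
  · rw [mem_ball_iff_norm, not_lt] at hz'
    linarith
  · rw [rieszProjection_eq_of_mul_self_eq_one_sub hF (h01.trans hr₁) (hr₂.trans h22)
      fun z hz => hres z (mem_sphere_iff_norm.1 hz ▸ hr₁) (mem_sphere_iff_norm.1 hz).le,
      one_div, add_comm F, sub_sub_cancel_left, FunLike.coe_neg, ContinuousLinearMap.mul_def,
      ContinuousLinearMap.coe_comp]
    exact (hR.clm_comp _).neg

/-- Let `F` be bounded on a complex Hilbert space with `F² = 1 − R`, `R`
compact, and suppose the annulus `{λ : r₁ < |λ − 1| < r₂}` (with `0 < r₁ < r₂ < 2`) is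
disjoint from `Sp(F)`.  Then for `r ∈ (r₁, r₂)` the Riesz projection
`Π = (1/2πi)∮_{|λ−1|=r} (λ − F)⁻¹ dλ` is an idempotent and `Π − ½(F + 1)` is compact. -/
theorem stmt15 {H : Type*} [NormedAddCommGroup H] [InnerProductSpace ℂ H] [CompleteSpace H]
    (F R : H →L[ℂ] H) (hR : IsCompactOperator R) (hF : F * F = 1 - R)
    (r₁ r₂ : ℝ) (h01 : 0 < r₁) (h12 : r₁ < r₂) (h22 : r₂ < 2)
    (hann : ∀ l : ℂ, r₁ < ‖l - 1‖ → ‖l - 1‖ < r₂ → l ∉ spectrum ℂ F)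
    (r : ℝ) (hr : r ∈ Set.Ioo r₁ r₂)
    (P : H →L[ℂ] H)
    (hP : P = (2 * π * Complex.I : ℂ)⁻¹ •
        ∮ z in C(1, r), Ring.inverse (z • (1 : H →L[ℂ] H) - F)) :
    P * P = P ∧ IsCompactOperator ((P - (1 / 2 : ℂ) • (F + 1)) : H →L[ℂ] H) :=
  stmt15_general F R hR hF r₁ r₂ h01 h22 hann r hr P hP
end
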